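/- Let R be a left noetherian k-algebra, σ an automorphism of R, and a a regular central element. Then the generalized Weyl algebra R(σ, a) is left noetherian. -/

import Mathlib

/-- Presentation relations for the rank `n` generalized Weyl algebra `R(σ, a)`:
it is generated over `R` (whose ring structure is imposed by the first four
relation families) by `x_i = ι (inr (i, false))` and `y_i = ι (inr (i, true))`,
subject to `x_i r = σ_i(r) x_i`, `y_i r = σ_i⁻¹(r) y_i`, `y_i x_i = a_i`,
`x_i y_i = σ_i(a_i)`, and `[x_i, x_j] = [y_i, y_j] = [x_i, y_j] = 0` for `i ≠ j`. -/
inductive GWARel (k R : Type*) [CommRing k] [Ring R] [Algebra k R]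
    (n : ℕ) (σ : Fin n → R ≃ₐ[k] R) (a : Fin n → R) :
    FreeAlgebra k (R ⊕ Fin n × Bool) → FreeAlgebra k (R ⊕ Fin n × Bool) → Prop
  | add (r s : R) : GWARel k R n σ a (FreeAlgebra.ι k (.inl (r + s)))
      (FreeAlgebra.ι k (.inl r) + FreeAlgebra.ι k (.inl s))
  | mul (r s : R) : GWARel k R n σ a (FreeAlgebra.ι k (.inl (r * s)))
      (FreeAlgebra.ι k (.inl r) * FreeAlgebra.ι k (.inl s))
  | smul (c : k) (r : R) : GWARel k R n σ a (FreeAlgebra.ι k (.inl (c • r)))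
      (c • FreeAlgebra.ι k (.inl r))
  | one : GWARel k R n σ a (FreeAlgebra.ι k (.inl 1)) 1
  | xr (i : Fin n) (r : R) : GWARel k R n σ a
      (FreeAlgebra.ι k (.inr (i, false)) * FreeAlgebra.ι k (.inl r))
      (FreeAlgebra.ι k (.inl (σ i r)) * FreeAlgebra.ι k (.inr (i, false)))
  | yr (i : Fin n) (r : R) : GWARel k R n σ a
      (FreeAlgebra.ι k (.inr (i, true)) * FreeAlgebra.ι k (.inl r))
      (FreeAlgebra.ι k (.inl ((σ i).symm r)) * FreeAlgebra.ι k (.inr (i, true)))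
  | yx (i : Fin n) : GWARel k R n σ a
      (FreeAlgebra.ι k (.inr (i, true)) * FreeAlgebra.ι k (.inr (i, false)))
      (FreeAlgebra.ι k (.inl (a i)))
  | xy (i : Fin n) : GWARel k R n σ a
      (FreeAlgebra.ι k (.inr (i, false)) * FreeAlgebra.ι k (.inr (i, true)))
      (FreeAlgebra.ι k (.inl (σ i (a i))))
  | comm (i j : Fin n) (s t : Bool) (h : i ≠ j) : GWARel k R n σ a
      (FreeAlgebra.ι k (.inr (i, s)) * FreeAlgebra.ι k (.inr (j, t)))
      (FreeAlgebra.ι k (.inr (j, t)) * FreeAlgebra.ι k (.inr (i, s)))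

/-- The rank `n` generalized Weyl algebra `R(σ, a)`, presented by generators and
relations. -/
abbrev GWA (k R : Type*) [CommRing k] [Ring R] [Algebra k R]
    (n : ℕ) (σ : Fin n → R ≃ₐ[k] R) (a : Fin n → R) : Type _ :=
  RingQuot (GWARel k R n σ a)

/-- The image of `r ∈ R` in the generalized Weyl algebra. -/
noncomputable def GWA.r (k R : Type*) [CommRing k] [Ring R] [Algebra k R]
    {n : ℕ} (σ : Fin n → R ≃ₐ[k] R) (a : Fin n → R) (r : R) : GWA k R n σ a :=
  RingQuot.mkAlgHom k (GWARel k R n σ a) (FreeAlgebra.ι k (.inl r))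

/-- The generator `x_i` of the generalized Weyl algebra. -/
noncomputable def GWA.x (k R : Type*) [CommRing k] [Ring R] [Algebra k R]
    {n : ℕ} (σ : Fin n → R ≃ₐ[k] R) (a : Fin n → R) (i : Fin n) : GWA k R n σ a :=
  RingQuot.mkAlgHom k (GWARel k R n σ a) (FreeAlgebra.ι k (.inr (i, false)))

/-- The generator `y_i` of the generalized Weyl algebra. -/
noncomputable def GWA.y (k R : Type*) [CommRing k] [Ring R] [Algebra k R]
    {n : ℕ} (σ : Fin n → R ≃ₐ[k] R) (a : Fin n → R) (i : Fin n) : GWA k R n σ a :=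
  RingQuot.mkAlgHom k (GWARel k R n σ a) (FreeAlgebra.ι k (.inr (i, true)))


/-!
The monomials `w_m` (`x ^ m` for `m ≥ 0`, `y ^ (-m)` for `m < 0`) form a basis of `R(σ, a)` as a
left `R`-module. To see it without normal forms, let `x` and `y` act on `ℤ →₀ R` by the weighted
shifts describing left multiplication on this basis; centrality of `a` is what makes these shifts
satisfy `yx = a` and `xy = σ(a)`. Evaluating this representation at `w_0` gives a coefficient map
inverse to `f ↦ ∑ f m • w_m`.

Noetherianity then follows as in the Hilbert basis theorem, with leading coefficients at both
ends. For a left ideal `I`, the leading coefficients at `±n` of the elements of `I` supported in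
`[-n, n]`, suitably twisted by powers of `σ`, form two increasing chains of left ideals of `R`;
let both be stable from `N` on. Past `N`, multiplying elements supported in `[-N, N]` by powers of
`x` and of `y` cancels both extreme coefficients of any element of `I`, so `I` is generated by its
elements supported in `[-N, N]`, whose coefficient vectors lie in the noetherian module `R^(2N+1)`.
-/

open Finsupp Set

namespace Finsupp

variable {M R : Type*} [AddCommMonoid M] [Semiring R] [Module R M]

theorem exists_nat_mem_supported_Icc_neg (f : ℤ →₀ M) :
    ∃ n : ℕ, f ∈ supported M R (Icc (-n : ℤ) n) := by
  refine ⟨f.support.sup Int.natAbs, (mem_supported R f).2 fun m hm => ?_⟩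
  have := Finset.le_sup (f := Int.natAbs) (Finset.mem_coe.1 hm)
  exact ⟨by omega, by omega⟩

theorem mem_supported_Icc_add_one_sub_one {f : ℤ →₀ M} {p q : ℤ}
    (hf : f ∈ supported M R (Icc p q)) (hp : f p = 0) (hq : f q = 0) :
    f ∈ supported M R (Icc (p + 1) (q - 1)) := by
  refine (mem_supported' R f).2 fun m hm => ?_
  obtain rfl | rfl | hm' : m = p ∨ m = q ∨ m ∉ Icc p q := by
    simp only [mem_Icc, not_and_or, not_le] at hm ⊢; omega
  exacts [hp, hq, (mem_supported' R f).1 hf m hm']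

end Finsupp

namespace GWA

variable {k R : Type*} [CommRing k] [Ring R] [Algebra k R]

section Relations

variable {n : ℕ} (σ : Fin n → R ≃ₐ[k] R) (a : Fin n → R)

noncomputable def ι : R →ₐ[k] GWA k R n σ a :=
  AlgHom.mk'
    (RingHom.mk'
      ⟨⟨GWA.r k R σ a, (RingQuot.mkAlgHom_rel k GWARel.one).trans (map_one _)⟩,
        fun r s => (RingQuot.mkAlgHom_rel k (GWARel.mul r s)).trans (map_mul _ _ _)⟩
      fun r s => (RingQuot.mkAlgHom_rel k (GWARel.add r s)).trans (map_add _ _ _))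
    fun c r => (RingQuot.mkAlgHom_rel k (GWARel.smul c r)).trans (map_smul _ _ _)

theorem ι_apply (r : R) : ι σ a r = GWA.r k R σ a r := rfl

theorem x_mul_ι (i : Fin n) (r : R) : x k R σ a i * ι σ a r = ι σ a (σ i r) * x k R σ a i := by
  simpa [x, ι_apply, GWA.r] using RingQuot.mkAlgHom_rel k (GWARel.xr i r (σ := σ) (a := a))

theorem y_mul_ι (i : Fin n) (r : R) :
    y k R σ a i * ι σ a r = ι σ a ((σ i).symm r) * y k R σ a i := by
  simpa [y, ι_apply, GWA.r] using RingQuot.mkAlgHom_rel k (GWARel.yr i r (σ := σ) (a := a))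

theorem y_mul_x (i : Fin n) : y k R σ a i * x k R σ a i = ι σ a (a i) := by
  simpa [x, y, ι_apply, GWA.r] using RingQuot.mkAlgHom_rel k (GWARel.yx i (σ := σ) (a := a))

theorem x_mul_y (i : Fin n) : x k R σ a i * y k R σ a i = ι σ a (σ i (a i)) := by
  simpa [x, y, ι_apply, GWA.r] using RingQuot.mkAlgHom_rel k (GWARel.xy i (σ := σ) (a := a))

end Relations

section RankOne

variable (σ : R ≃ₐ[k] R) (a : R)

local notation "𝔸" => GWA k R 1 ![σ] ![a]
local notation "𝐱" => GWA.x k R ![σ] ![a] 0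
local notation "𝐲" => GWA.y k R ![σ] ![a] 0
local notation "𝐫" => GWA.ι (k := k) ![σ] ![a]

section ShiftRepresentation

/-- In the basis of monomials `w_m` (`monomial` below), `x w_m = xFactor m • w_(m+1)` and
`y w_m = yFactor m • w_(m-1)`. -/
def xFactor (m : ℤ) : R := if 0 ≤ m then 1 else σ a

def yFactor (m : ℤ) : R := if m ≤ 0 then 1 else a

noncomputable def xShift : Module.End k (ℤ →₀ R) :=
  Finsupp.lsum k fun m =>
    Finsupp.lsingle (m + 1) ∘ₗ LinearMap.mulRight k (xFactor σ a m) ∘ₗ σ.toLinearMap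

noncomputable def yShift : Module.End k (ℤ →₀ R) :=
  Finsupp.lsum k fun m =>
    Finsupp.lsingle (m - 1) ∘ₗ LinearMap.mulRight k (yFactor a m) ∘ₗ σ.symm.toLinearMap

theorem xShift_single (m : ℤ) (s : R) :
    xShift σ a (single m s) = single (m + 1) (σ s * xFactor σ a m) := by
  simp [xShift]

theorem yShift_single (m : ℤ) (s : R) :
    yShift σ a (single m s) = single (m - 1) (σ.symm s * yFactor a m) := by
  simp [yShift]

theorem xShift_apply (f : ℤ →₀ R) (m : ℤ) :
    xShift σ a f m = σ (f (m - 1)) * xFactor σ a (m - 1) := by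
  induction f using Finsupp.induction_linear with
  | zero => simp
  | add f g hf hg => simp [hf, hg, add_mul]
  | single n s =>
    rw [xShift_single]
    obtain rfl | hm := eq_or_ne m (n + 1)
    · simp
    · rw [single_eq_of_ne (by omega), single_eq_of_ne (by omega), map_zero, zero_mul]

theorem yShift_apply (f : ℤ →₀ R) (m : ℤ) :
    yShift σ a f m = σ.symm (f (m + 1)) * yFactor a (m + 1) := by
  induction f using Finsupp.induction_linear with
  | zero => simp
  | add f g hf hg => simp [hf, hg, add_mul]
  | single n s =>
    rw [yShift_single]
    obtain rfl | hm := eq_or_ne m (n - 1)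
    · simp
    · rw [single_eq_of_ne (by omega), single_eq_of_ne (by omega), map_zero, zero_mul]

theorem xShift_smul (r : R) (f : ℤ →₀ R) : xShift σ a (r • f) = σ r • xShift σ a f := by
  ext m
  simp [xShift_apply, mul_assoc]

theorem yShift_smul (r : R) (f : ℤ →₀ R) : yShift σ a (r • f) = σ.symm r • yShift σ a f := by
  ext m
  simp [yShift_apply, mul_assoc]

variable {a}

theorem yShift_xShift (hcent : ∀ r : R, a * r = r * a) (f : ℤ →₀ R) :
    yShift σ a (xShift σ a f) = a • f := by
  ext m
  rw [yShift_apply, xShift_apply, add_sub_cancel_right, map_mul, σ.symm_apply_apply,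
    Finsupp.smul_apply, smul_eq_mul, hcent, mul_assoc]
  congr 1
  by_cases hm : 0 ≤ m
  · rw [xFactor, yFactor, if_pos hm, if_neg (by omega), map_one, one_mul]
  · rw [xFactor, yFactor, if_neg hm, if_pos (by omega), σ.symm_apply_apply, mul_one]

theorem xShift_yShift (hcent : ∀ r : R, a * r = r * a) (f : ℤ →₀ R) :
    xShift σ a (yShift σ a f) = σ a • f := by
  have hcent' (r : R) : σ a * r = r * σ a := by
    simpa using congrArg σ (hcent (σ.symm r))
  ext m
  rw [xShift_apply, yShift_apply, sub_add_cancel, map_mul, σ.apply_symm_apply,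
    Finsupp.smul_apply, smul_eq_mul, hcent', mul_assoc]
  congr 1
  by_cases hm : m ≤ 0
  · rw [yFactor, xFactor, if_pos hm, if_neg (by omega), map_one, one_mul]
  · rw [yFactor, xFactor, if_neg hm, if_pos (by omega), mul_one]

/-- The left regular representation of `R(σ, a)`, written in the basis of monomials. -/
noncomputable def shiftRep (hcent : ∀ r : R, a * r = r * a) : 𝔸 →ₐ[k] Module.End k (ℤ →₀ R) :=
  RingQuot.liftAlgHom k
    ⟨FreeAlgebra.lift k
      (Sum.elim (Algebra.lsmul k k (ℤ →₀ R)) fun p => cond p.2 (yShift σ a) (xShift σ a)), by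
      rintro _ _ (_ | _ | _ | _ | ⟨i, r⟩ | ⟨i, r⟩ | i | i | ⟨i, j, s, t, hij⟩) <;>
        try simp only [Subsingleton.elim i 0]
      all_goals first
        | exact absurd (Subsingleton.elim i j) hij
        | exact LinearMap.ext fun f => by
            simp [xShift_smul, yShift_smul, xShift_yShift, yShift_xShift, hcent]⟩

variable (hcent : ∀ r : R, a * r = r * a)

theorem shiftRep_ι (r : R) (f : ℤ →₀ R) : shiftRep σ hcent (𝐫 r) f = r • f := by
  simp [shiftRep, ι_apply, GWA.r]

theorem shiftRep_x : shiftRep σ hcent 𝐱 = xShift σ a := by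
  simp [shiftRep, GWA.x]

theorem shiftRep_y : shiftRep σ hcent 𝐲 = yShift σ a := by
  simp [shiftRep, GWA.y]

end ShiftRepresentation

section Coefficients

/-- `w_m = x ^ m` for `m ≥ 0` and `w_m = y ^ (-m)` for `m ≤ 0`: one of the two factors is `1`. -/
noncomputable def monomial (m : ℤ) : 𝔸 := 𝐱 ^ m.toNat * 𝐲 ^ (-m).toNat

theorem monomial_zero : monomial σ a 0 = 1 := by
  simp [monomial]

theorem x_mul_monomial (m : ℤ) :
    𝐱 * monomial σ a m = 𝐫 (xFactor σ a m) * monomial σ a (m + 1) := by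
  by_cases hm : 0 ≤ m
  · rw [monomial, monomial, xFactor, if_pos hm, map_one, one_mul, ← mul_assoc, ← pow_succ',
      show (m + 1).toNat = m.toNat + 1 by omega, show (-m).toNat = (-(m + 1)).toNat by omega]
  · rw [monomial, monomial, xFactor, if_neg hm, show m.toNat = 0 by omega,
      show (m + 1).toNat = 0 by omega, show (-m).toNat = (-(m + 1)).toNat + 1 by omega,
      pow_succ', pow_zero, one_mul, one_mul, ← mul_assoc, x_mul_y]
    simp

theorem y_mul_monomial (m : ℤ) :
    𝐲 * monomial σ a m = 𝐫 (yFactor a m) * monomial σ a (m - 1) := by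
  by_cases hm : m ≤ 0
  · rw [monomial, monomial, yFactor, if_pos hm, map_one, one_mul, show m.toNat = 0 by omega,
      show (m - 1).toNat = 0 by omega, show (-(m - 1)).toNat = (-m).toNat + 1 by omega,
      pow_zero, one_mul, one_mul, pow_succ']
  · rw [monomial, monomial, yFactor, if_neg hm, show (-m).toNat = 0 by omega,
      show (-(m - 1)).toNat = 0 by omega, show m.toNat = (m - 1).toNat + 1 by omega, pow_succ',
      ← mul_assoc, ← mul_assoc, y_mul_x]
    simp

noncomputable def ofCoeffs : (ℤ →₀ R) →ₗ[k] 𝔸 :=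
  Finsupp.lsum k fun m => LinearMap.mulRight k (monomial σ a m) ∘ₗ (𝐫).toLinearMap

theorem ofCoeffs_single (m : ℤ) (s : R) : ofCoeffs σ a (single m s) = 𝐫 s * monomial σ a m := by
  simp [ofCoeffs]

theorem ofCoeffs_smul (r : R) (f : ℤ →₀ R) : ofCoeffs σ a (r • f) = 𝐫 r * ofCoeffs σ a f := by
  induction f using Finsupp.induction_linear with
  | zero => simp
  | add f g hf hg => simp only [smul_add, map_add, hf, hg, mul_add]
  | single m s =>
    rw [smul_single, smul_eq_mul, ofCoeffs_single, ofCoeffs_single, map_mul, mul_assoc]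

theorem ofCoeffs_xShift (f : ℤ →₀ R) : ofCoeffs σ a (xShift σ a f) = 𝐱 * ofCoeffs σ a f := by
  induction f using Finsupp.induction_linear with
  | zero => simp
  | add f g hf hg => simp only [map_add, hf, hg, mul_add]
  | single m s =>
    rw [xShift_single, ofCoeffs_single, ofCoeffs_single, ← mul_assoc, x_mul_ι, mul_assoc,
      x_mul_monomial, map_mul, mul_assoc]
    simp

theorem ofCoeffs_yShift (f : ℤ →₀ R) : ofCoeffs σ a (yShift σ a f) = 𝐲 * ofCoeffs σ a f := by
  induction f using Finsupp.induction_linear with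
  | zero => simp
  | add f g hf hg => simp only [map_add, hf, hg, mul_add]
  | single m s =>
    rw [yShift_single, ofCoeffs_single, ofCoeffs_single, ← mul_assoc, y_mul_ι, mul_assoc,
      y_mul_monomial, map_mul, mul_assoc]
    simp

theorem ofCoeffs_mem_span {s : Set (ℤ →₀ R)} {f : ℤ →₀ R} (hf : f ∈ Submodule.span R s) :
    ofCoeffs σ a f ∈ Submodule.span 𝔸 (ofCoeffs σ a '' s) := by
  induction hf using Submodule.span_induction with
  | mem f hf => exact Submodule.subset_span (mem_image_of_mem _ hf)
  | zero => simp
  | add f g _ _ hf hg => simpa using add_mem hf hg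
  | smul r f _ hf => simpa [ofCoeffs_smul] using Submodule.smul_mem _ (𝐫 r) hf

variable {a} (hcent : ∀ r : R, a * r = r * a)

theorem ofCoeffs_shiftRep (t : 𝔸) (f : ℤ →₀ R) :
    ofCoeffs σ a (shiftRep σ hcent t f) = t * ofCoeffs σ a f := by
  obtain ⟨z, rfl⟩ := RingQuot.mkAlgHom_surjective k _ t
  induction z using FreeAlgebra.induction generalizing f with
  | grade0 c => simp [Algebra.smul_def]
  | grade1 g =>
    obtain r | ⟨i, _ | _⟩ := g
    · exact (shiftRep_ι σ hcent r f).symm ▸ ofCoeffs_smul σ a r f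
    · rw [Subsingleton.elim i 0]
      exact (shiftRep_x σ hcent).symm ▸ ofCoeffs_xShift σ a f
    · rw [Subsingleton.elim i 0]
      exact (shiftRep_y σ hcent).symm ▸ ofCoeffs_yShift σ a f
  | mul z w hz hw => rw [map_mul, map_mul, Module.End.mul_apply, hz, hw, mul_assoc]
  | add z w hz hw => rw [map_add, map_add, LinearMap.add_apply, map_add, hz, hw, add_mul]

/-- The coefficients of an element of `R(σ, a)` in the basis of monomials. -/
noncomputable def coeffs : 𝔸 →ₗ[k] ℤ →₀ R :=
  LinearMap.applyₗ (single 0 1) ∘ₗ (shiftRep σ hcent).toLinearMap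

theorem coeffs_mul (t u : 𝔸) :
    coeffs σ hcent (t * u) = shiftRep σ hcent t (coeffs σ hcent u) := by
  simp [coeffs]

theorem ofCoeffs_coeffs (t : 𝔸) : ofCoeffs σ a (coeffs σ hcent t) = t := by
  rw [coeffs, LinearMap.comp_apply, LinearMap.applyₗ_apply_apply, AlgHom.toLinearMap_apply,
    ofCoeffs_shiftRep, ofCoeffs_single, map_one, one_mul, monomial_zero, mul_one]

theorem coeffs_ι_mul (r : R) (t : 𝔸) : coeffs σ hcent (𝐫 r * t) = r • coeffs σ hcent t := by
  rw [coeffs_mul, shiftRep_ι]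

theorem coeffs_x_pow_mul (j : ℕ) (t : 𝔸) :
    coeffs σ hcent (𝐱 ^ j * t) = (xShift σ a ^ j) (coeffs σ hcent t) := by
  rw [coeffs_mul, map_pow, shiftRep_x]

theorem coeffs_y_pow_mul (j : ℕ) (t : 𝔸) :
    coeffs σ hcent (𝐲 ^ j * t) = (yShift σ a ^ j) (coeffs σ hcent t) := by
  rw [coeffs_mul, map_pow, shiftRep_y]

end Coefficients

section Windows

theorem xShift_pow_mem_supported {f : ℤ →₀ R} {p q : ℤ} (hf : f ∈ supported R R (Icc p q))
    (j : ℕ) : (xShift σ a ^ j) f ∈ supported R R (Icc (p + j) (q + j)) := by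
  induction j with
  | zero => simpa using hf
  | succ j ih =>
    refine (mem_supported' R _).2 fun m hm => ?_
    rw [pow_succ', Module.End.mul_apply, xShift_apply,
      (mem_supported' R _).1 ih (m - 1) (by simp only [mem_Icc] at hm ⊢; omega), map_zero,
      zero_mul]

theorem yShift_pow_mem_supported {f : ℤ →₀ R} {p q : ℤ} (hf : f ∈ supported R R (Icc p q))
    (j : ℕ) : (yShift σ a ^ j) f ∈ supported R R (Icc (p - j) (q - j)) := by
  induction j with
  | zero => simpa using hf
  | succ j ih =>
    refine (mem_supported' R _).2 fun m hm => ?_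
    rw [pow_succ', Module.End.mul_apply, yShift_apply,
      (mem_supported' R _).1 ih (m + 1) (by simp only [mem_Icc] at hm ⊢; omega), map_zero,
      zero_mul]

theorem xShift_pow_apply_add (f : ℤ →₀ R) {q : ℤ} (hq : 0 ≤ q) (j : ℕ) :
    (xShift σ a ^ j) f (q + j) = (σ ^ j) (f q) := by
  induction j with
  | zero => simp
  | succ j ih =>
    rw [pow_succ', Module.End.mul_apply, xShift_apply, show q + (j + 1 : ℕ) - 1 = q + j by omega,
      ih, xFactor, if_pos (by omega), mul_one, pow_succ', AlgEquiv.mul_apply]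

theorem yShift_pow_apply_sub (f : ℤ →₀ R) {p : ℤ} (hp : p ≤ 0) (j : ℕ) :
    (yShift σ a ^ j) f (p - j) = (σ.symm ^ j) (f p) := by
  induction j with
  | zero => simp
  | succ j ih =>
    rw [pow_succ', Module.End.mul_apply, yShift_apply, show p - (j + 1 : ℕ) + 1 = p - j by omega,
      ih, yFactor, if_pos (by omega), mul_one, pow_succ', AlgEquiv.mul_apply]

end Windows

section LeadingCoefficients

variable {a} (hcent : ∀ r : R, a * r = r * a)

def boundedPart (I : Ideal 𝔸) (n : ℕ) : Set 𝔸 :=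
  {t | t ∈ I ∧ coeffs σ hcent t ∈ supported R R (Icc (-n : ℤ) n)}

theorem boundedPart_mono (I : Ideal 𝔸) : Monotone (boundedPart σ hcent I) :=
  fun _ _ hmn _ ht =>
    ⟨ht.1, supported_mono (Icc_subset_Icc (by simpa using hmn) (by simpa using hmn)) ht.2⟩

theorem span_boundedPart_le (I : Ideal 𝔸) (n : ℕ) :
    Submodule.span 𝔸 (boundedPart σ hcent I n) ≤ I :=
  Submodule.span_le.2 fun _ ht => ht.1

def leadingCoeffs (I : Ideal 𝔸) (n : ℕ) (p : ℤ) (τ : R ≃ₐ[k] R) : Submodule R R where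
  carrier := {r | ∃ t ∈ boundedPart σ hcent I n, coeffs σ hcent t p = τ r}
  zero_mem' := ⟨0, ⟨I.zero_mem, by simp⟩, by simp⟩
  add_mem' := by
    rintro _ _ ⟨t, ⟨ht, htn⟩, htp⟩ ⟨u, ⟨hu, hun⟩, hup⟩
    exact ⟨t + u, ⟨I.add_mem ht hu, by simpa using add_mem htn hun⟩, by simp [htp, hup]⟩
  smul_mem' := by
    rintro c _ ⟨t, ⟨ht, htn⟩, htp⟩
    refine ⟨𝐫 (τ c) * t, ⟨I.mul_mem_left _ ht, ?_⟩, ?_⟩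
    · simpa [coeffs_ι_mul] using Submodule.smul_mem _ (τ c) htn
    · simp [coeffs_ι_mul, htp]

/-- The twist by `σ ^ n` makes the chain increasing: left multiplication by `x` moves the
coefficient at `n` to `n + 1` and applies `σ` to it. -/
def topCoeffs (I : Ideal 𝔸) (n : ℕ) : Submodule R R := leadingCoeffs σ hcent I n n (σ ^ n)

def bottomCoeffs (I : Ideal 𝔸) (n : ℕ) : Submodule R R :=
  leadingCoeffs σ hcent I n (-n) (σ.symm ^ n)

theorem monotone_topCoeffs (I : Ideal 𝔸) : Monotone (topCoeffs σ hcent I) := by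
  refine monotone_nat_of_le_succ fun n => ?_
  rintro _ ⟨t, ⟨ht, htn⟩, htp⟩
  refine ⟨𝐱 ^ 1 * t, ⟨I.mul_mem_left _ ht, ?_⟩, ?_⟩
  · rw [coeffs_x_pow_mul]
    exact supported_mono (Icc_subset_Icc (by omega) (by omega))
      (xShift_pow_mem_supported σ a htn 1)
  · have := xShift_pow_apply_add σ a (coeffs σ hcent t) n.cast_nonneg 1
    rw [Nat.cast_one, htp, ← AlgEquiv.mul_apply, ← pow_add, add_comm 1 n] at this
    rwa [coeffs_x_pow_mul, Nat.cast_succ]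

theorem monotone_bottomCoeffs (I : Ideal 𝔸) : Monotone (bottomCoeffs σ hcent I) := by
  refine monotone_nat_of_le_succ fun n => ?_
  rintro _ ⟨t, ⟨ht, htn⟩, htp⟩
  refine ⟨𝐲 ^ 1 * t, ⟨I.mul_mem_left _ ht, ?_⟩, ?_⟩
  · rw [coeffs_y_pow_mul]
    exact supported_mono (Icc_subset_Icc (by omega) (by omega))
      (yShift_pow_mem_supported σ a htn 1)
  · have := yShift_pow_apply_sub σ a (coeffs σ hcent t) (neg_nonpos.2 n.cast_nonneg) 1
    rw [Nat.cast_one, htp, ← AlgEquiv.mul_apply, ← pow_add, add_comm 1 n] at this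
    rwa [coeffs_y_pow_mul, Nat.cast_succ, neg_add, ← sub_eq_add_neg]

theorem exists_topCoeffs_bottomCoeffs_stable [IsNoetherianRing R] (I : Ideal 𝔸) :
    ∃ N : ℕ, ∀ n, N ≤ n →
      topCoeffs σ hcent I n ≤ topCoeffs σ hcent I N ∧
      bottomCoeffs σ hcent I n ≤ bottomCoeffs σ hcent I N := by
  obtain ⟨N₁, h₁⟩ :=
    monotone_stabilizes_iff_noetherian.2 ‹_› ⟨_, monotone_topCoeffs σ hcent I⟩
  obtain ⟨N₂, h₂⟩ :=
    monotone_stabilizes_iff_noetherian.2 ‹_› ⟨_, monotone_bottomCoeffs σ hcent I⟩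
  refine ⟨max N₁ N₂, fun n hn => ⟨?_, ?_⟩⟩
  · exact (h₁ n (by omega)).symm.le.trans (monotone_topCoeffs σ hcent I (le_max_left _ _))
  · exact (h₂ n (by omega)).symm.le.trans
      (monotone_bottomCoeffs σ hcent I (le_max_right _ _))

theorem exists_mem_span_coeffs_top_eq (I : Ideal 𝔸) {N n : ℕ} (hNn : N < n)
    (hle : topCoeffs σ hcent I n ≤ topCoeffs σ hcent I N)
    {t : 𝔸} (ht : t ∈ boundedPart σ hcent I n) :
    ∃ u ∈ Submodule.span 𝔸 (boundedPart σ hcent I N),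
      coeffs σ hcent u ∈ supported R R (Icc (-n + 1 : ℤ) n) ∧
      coeffs σ hcent u n = coeffs σ hcent t n := by
  obtain ⟨q, hq, hqN⟩ := hle ⟨t, ht, ((σ ^ n).apply_symm_apply _).symm⟩
  refine ⟨𝐱 ^ (n - N) * q, Submodule.smul_mem _ _ (Submodule.subset_span hq), ?_, ?_⟩
  · rw [coeffs_x_pow_mul]
    exact supported_mono (Icc_subset_Icc (by omega) (by omega))
      (xShift_pow_mem_supported σ a hq.2 (n - N))
  · calc coeffs σ hcent (𝐱 ^ (n - N) * q) n
        = (xShift σ a ^ (n - N)) (coeffs σ hcent q) (N + (n - N : ℕ)) := by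
          rw [coeffs_x_pow_mul]; congr 1; omega
      _ = (σ ^ (n - N) * σ ^ N) ((σ ^ n).symm (coeffs σ hcent t n)) := by
          rw [xShift_pow_apply_add σ a _ N.cast_nonneg, hqN, AlgEquiv.mul_apply]
      _ = coeffs σ hcent t n := by
          rw [← pow_add, Nat.sub_add_cancel hNn.le, AlgEquiv.apply_symm_apply]

theorem exists_mem_span_coeffs_bottom_eq (I : Ideal 𝔸) {N n : ℕ} (hNn : N < n)
    (hle : bottomCoeffs σ hcent I n ≤ bottomCoeffs σ hcent I N)
    {t : 𝔸} (ht : t ∈ boundedPart σ hcent I n) :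
    ∃ v ∈ Submodule.span 𝔸 (boundedPart σ hcent I N),
      coeffs σ hcent v ∈ supported R R (Icc (-n : ℤ) (n - 1)) ∧
      coeffs σ hcent v (-n) = coeffs σ hcent t (-n) := by
  obtain ⟨q, hq, hqN⟩ := hle ⟨t, ht, ((σ.symm ^ n).apply_symm_apply _).symm⟩
  refine ⟨𝐲 ^ (n - N) * q, Submodule.smul_mem _ _ (Submodule.subset_span hq), ?_, ?_⟩
  · rw [coeffs_y_pow_mul]
    exact supported_mono (Icc_subset_Icc (by omega) (by omega))
      (yShift_pow_mem_supported σ a hq.2 (n - N))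
  · calc coeffs σ hcent (𝐲 ^ (n - N) * q) (-n)
        = (yShift σ a ^ (n - N)) (coeffs σ hcent q) (-N - (n - N : ℕ)) := by
          rw [coeffs_y_pow_mul]; congr 1; omega
      _ = (σ.symm ^ (n - N) * σ.symm ^ N) ((σ.symm ^ n).symm (coeffs σ hcent t (-n))) := by
          rw [yShift_pow_apply_sub σ a _ (neg_nonpos.2 N.cast_nonneg), hqN, AlgEquiv.mul_apply]
      _ = coeffs σ hcent t (-n) := by
          rw [← pow_add, Nat.sub_add_cancel hNn.le, AlgEquiv.apply_symm_apply]

/-- Subtracting the two approximations above shrinks the support window by one on each side. -/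
theorem boundedPart_subset_span (I : Ideal 𝔸) {N : ℕ}
    (hN : ∀ n, N ≤ n →
      topCoeffs σ hcent I n ≤ topCoeffs σ hcent I N ∧
      bottomCoeffs σ hcent I n ≤ bottomCoeffs σ hcent I N)
    (n : ℕ) : boundedPart σ hcent I n ⊆ Submodule.span 𝔸 (boundedPart σ hcent I N) := by
  induction n with
  | zero => exact (boundedPart_mono σ hcent I (Nat.zero_le N)).trans Submodule.subset_span
  | succ m ih =>
    intro t ht
    by_cases hmN : m + 1 ≤ N
    · exact Submodule.subset_span (boundedPart_mono σ hcent I hmN ht)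
    obtain ⟨u, hu, hu_supp, hu_top⟩ :=
      exists_mem_span_coeffs_top_eq σ hcent I (by omega) (hN _ (by omega)).1 ht
    obtain ⟨v, hv, hv_supp, hv_bot⟩ :=
      exists_mem_span_coeffs_bottom_eq σ hcent I (by omega) (hN _ (by omega)).2 ht
    have hI := span_boundedPart_le σ hcent I N
    have hw : coeffs σ hcent (t - u - v) ∈ supported R R (Icc (-(m + 1 : ℕ) : ℤ) (m + 1 : ℕ)) := by
      rw [map_sub, map_sub]
      exact sub_mem (sub_mem ht.2 (supported_mono (Icc_subset_Icc (by omega) le_rfl) hu_supp))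
        (supported_mono (Icc_subset_Icc le_rfl (by omega)) hv_supp)
    have hrest : t - u - v ∈ boundedPart σ hcent I m := by
      refine ⟨I.sub_mem (I.sub_mem ht.1 (hI hu)) (hI hv), ?_⟩
      refine supported_mono (Icc_subset_Icc (by omega) (by omega))
        (mem_supported_Icc_add_one_sub_one hw ?_ ?_)
      · rw [map_sub, map_sub, Finsupp.sub_apply, Finsupp.sub_apply, hv_bot,
          (mem_supported' R _).1 hu_supp _ (by simp), sub_zero, sub_self]
      · rw [map_sub, map_sub, Finsupp.sub_apply, Finsupp.sub_apply, hu_top,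
          (mem_supported' R _).1 hv_supp _ (by simp), sub_self, sub_zero]
    have := add_mem (add_mem (ih hrest) hv) hu
    rwa [sub_add_cancel, sub_add_cancel] at this

theorem exists_finset_subset_span_boundedPart [IsNoetherianRing R] (I : Ideal 𝔸) (N : ℕ) :
    ∃ G : Finset 𝔸, (G : Set 𝔸) ⊆ I ∧
      boundedPart σ hcent I N ⊆ Submodule.span 𝔸 (G : Set 𝔸) := by
  classical
  have : IsNoetherian R (supported R R (Icc (-N : ℤ) N)) :=
    isNoetherian_of_linearEquiv (supportedEquivFinsupp _).symm
  obtain ⟨G', hG'⟩ := isNoetherian_submodule.1 this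
    (Submodule.span R (coeffs σ hcent '' boundedPart σ hcent I N))
    (Submodule.span_le.2 <| image_subset_iff.2 fun _ ht => ht.2)
  have hspan : ofCoeffs σ a '' (Submodule.span R (coeffs σ hcent '' boundedPart σ hcent I N)) ⊆
      Submodule.span 𝔸 (boundedPart σ hcent I N) := by
    rintro _ ⟨f, hf, rfl⟩
    simpa [image_image, ofCoeffs_coeffs] using ofCoeffs_mem_span σ a hf
  refine ⟨G'.image (ofCoeffs σ a), ?_, fun t ht => ?_⟩
  · rw [Finset.coe_image]
    exact ((image_mono (hG' ▸ Submodule.subset_span)).trans hspan).trans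
      (span_boundedPart_le σ hcent I N)
  · rw [← ofCoeffs_coeffs σ hcent t, Finset.coe_image]
    exact ofCoeffs_mem_span σ a (hG' ▸ Submodule.subset_span (mem_image_of_mem _ ht))

end LeadingCoefficients

end RankOne

end GWA

theorem gwa_isNoetherianRing_general (k R : Type*) [CommRing k] [Ring R] [Algebra k R]
    [IsNoetherianRing R]
    (σ : R ≃ₐ[k] R) (a : R) (hcent : ∀ r : R, a * r = r * a) :
    IsNoetherianRing (GWA k R 1 ![σ] ![a]) := by
  refine (isNoetherianRing_iff_ideal_fg _).2 fun I => ?_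
  obtain ⟨N, hN⟩ := GWA.exists_topCoeffs_bottomCoeffs_stable σ hcent I
  obtain ⟨G, hGI, hG⟩ := GWA.exists_finset_subset_span_boundedPart σ hcent I N
  refine ⟨G, le_antisymm (Submodule.span_le.2 hGI) fun t ht => ?_⟩
  obtain ⟨n, hn⟩ := Finsupp.exists_nat_mem_supported_Icc_neg (R := R) (GWA.coeffs σ hcent t)
  exact Submodule.span_le.2 hG (GWA.boundedPart_subset_span σ hcent I hN n ⟨ht, hn⟩)

/-- If `R` is a left noetherian `k`-algebra, `σ` an automorphism of `R`,
and `a` a regular central element, then the GWA `R(σ, a)` is left noetherian. -/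
theorem gwa_isNoetherianRing (k R : Type*) [CommRing k] [Ring R] [Algebra k R]
    [IsNoetherianRing R]
    (σ : R ≃ₐ[k] R) (a : R) (hreg : a ∈ nonZeroDivisors R) (hcent : ∀ r : R, a * r = r * a) :
    IsNoetherianRing (GWA k R 1 ![σ] ![a]) :=
  gwa_isNoetherianRing_general k R σ a hcent
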